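/- The edge count of the bounded-degree projection is monotone in θ: if θ ≤ θ', then the edge-addition projection at threshold θ outputs at most as many edges as at threshold θ'. -/

import Mathlib

/-- Degree of a vertex in a list of edges. -/
def listDeg {V : Type*} [DecidableEq V] (L : List (V × V)) (u : V) : ℕ :=
  (L.filter (fun e => e.1 = u ∨ e.2 = u)).length

/-- Edge-addition projection. -/
def edgeAddProj {V : Type*} [DecidableEq V] (θ : ℕ) (L : List (V × V)) :
    List (V × V) :=
  L.foldl (fun kept e =>
    if listDeg kept e.1 < θ ∧ listDeg kept e.2 < θ then kept ++ [e] else kept) []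

/-!
Run the algorithm at thresholds `θ ≤ θ'` side by side and let `u v` be the degree of `v` in the
`θ'`-run minus its degree in the `θ`-run. With `m = θ' - θ`, the potential
`∑ v, min (u v) (2 m - u v)` starts at `0` and never decreases. If only the `θ`-run keeps an edge,
some endpoint has `θ'`-degree at least `θ'` but `θ`-degree below `θ`, so its `u` exceeds `m` and
the tent `min u (2 m - u)` rises there by one as `u` drops, while at the other endpoint it falls by
at most one; symmetrically if only the `θ'`-run keeps it. As the potential is at most
`∑ v, u v = 2 (|E'| - |E|)`, the `θ`-run keeps at most as many edges.
-/

def tent (m u : ℤ) : ℤ := min u (2 * m - u)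

lemma tent_le (m u : ℤ) : tent m u ≤ u := min_le_left _ _

lemma tent_add_tent_le_of_lt_or_lt {m u₁ u₂ : ℤ} (h : u₁ < m ∨ u₂ < m) :
    tent m u₁ + tent m u₂ ≤ tent m (u₁ + 1) + tent m (u₂ + 1) := by
  unfold tent; omega

lemma tent_add_tent_le_of_gt_or_gt {m u₁ u₂ : ℤ} (h : m < u₁ ∨ m < u₂) :
    tent m u₁ + tent m u₂ ≤ tent m (u₁ - 1) + tent m (u₂ - 1) := by
  unfold tent; omega

lemma Finset.sum_le_sum_of_eq_off_pair {ι M : Type*} [DecidableEq ι] [AddCommMonoid M]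
    [PartialOrder M] [IsOrderedAddMonoid M] {s : Finset ι} {f g : ι → M}
    {a b : ι} (hab : a ≠ b) (ha : a ∈ s) (hb : b ∈ s)
    (hoff : ∀ v ∈ s, v ≠ a → v ≠ b → f v = g v) (hpair : f a + f b ≤ g a + g b) :
    ∑ v ∈ s, f v ≤ ∑ v ∈ s, g v := by
  have hb' : b ∈ s.erase a := Finset.mem_erase.2 ⟨hab.symm, hb⟩
  rw [← Finset.add_sum_erase s f ha, ← Finset.add_sum_erase s g ha,
    ← Finset.add_sum_erase _ f hb', ← Finset.add_sum_erase _ g hb']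
  have hrest : ∑ v ∈ (s.erase a).erase b, f v = ∑ v ∈ (s.erase a).erase b, g v :=
    Finset.sum_congr rfl fun v hv => by
      obtain ⟨hvb, hva, hvs⟩ : v ≠ b ∧ v ≠ a ∧ v ∈ s := by simpa using hv
      exact hoff v hvs hva hvb
  rw [hrest, ← add_assoc, ← add_assoc]
  exact add_le_add_left hpair _

section

variable {V : Type*} [DecidableEq V]

lemma listDeg_nil (u : V) : listDeg [] u = 0 := rfl

lemma listDeg_cons (e : V × V) (K : List (V × V)) (u : V) :
    listDeg (e :: K) u = listDeg K u + if e.1 = u ∨ e.2 = u then 1 else 0 := by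
  unfold listDeg
  split_ifs with h <;> simp [h]

lemma listDeg_append_singleton (K : List (V × V)) (e : V × V) (u : V) :
    listDeg (K ++ [e]) u = listDeg K u + if e.1 = u ∨ e.2 = u then 1 else 0 := by
  unfold listDeg
  split_ifs with h <;> simp [h]

def IsEdgeListOn (S : Finset V) (K : List (V × V)) : Prop :=
  ∀ e ∈ K, e.1 ≠ e.2 ∧ e.1 ∈ S ∧ e.2 ∈ S

omit [DecidableEq V] in
lemma IsEdgeListOn.of_sublist {S : Finset V} {K K' : List (V × V)} (hK : IsEdgeListOn S K)
    (h : K'.Sublist K) : IsEdgeListOn S K' :=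
  fun e he => hK e (h.subset he)

lemma sum_listDeg_eq_two_mul_length {S : Finset V} {K : List (V × V)} (hK : IsEdgeListOn S K) :
    ∑ v ∈ S, listDeg K v = 2 * K.length := by
  induction K with
  | nil => simp [listDeg_nil]
  | cons e K ih =>
    obtain ⟨hne, h1, h2⟩ := hK e List.mem_cons_self
    have hincident : S.filter (fun v => e.1 = v ∨ e.2 = v) = {e.1, e.2} := by
      ext v
      simp only [Finset.mem_filter, Finset.mem_insert, Finset.mem_singleton]
      grind
    have hpair : ∑ v ∈ S, (if e.1 = v ∨ e.2 = v then 1 else 0) = 2 := by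
      rw [Finset.sum_boole, hincident, Finset.card_pair hne, Nat.cast_ofNat]
    rw [Finset.sum_congr rfl fun v _ => listDeg_cons e K v, Finset.sum_add_distrib, hpair,
      ih fun f hf => hK f (List.mem_cons_of_mem _ hf), List.length_cons]
    ring

def edgeAddStep (θ : ℕ) (kept : List (V × V)) (e : V × V) : List (V × V) :=
  if listDeg kept e.1 < θ ∧ listDeg kept e.2 < θ then kept ++ [e] else kept

lemma foldl_edgeAddStep_sublist (θ : ℕ) (L A : List (V × V)) :
    (L.foldl (edgeAddStep θ) A).Sublist (A ++ L) := by
  induction L generalizing A with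
  | nil => simp
  | cons e L ih =>
    refine (ih _).trans ?_
    unfold edgeAddStep
    split_ifs
    · simp
    · exact (List.sublist_cons_self e L).append_left A

lemma edgeAddProj_sublist (θ : ℕ) (L : List (V × V)) : (edgeAddProj θ L).Sublist L :=
  foldl_edgeAddStep_sublist θ L []

def potential (θ θ' : ℕ) (S : Finset V) (A B : List (V × V)) : ℤ :=
  ∑ v ∈ S, tent ((θ' : ℤ) - θ) ((listDeg B v : ℤ) - listDeg A v)

lemma potential_le_potential_edgeAddStep (θ θ' : ℕ) {S : Finset V} {A B : List (V × V)}
    {e : V × V} (he : e.1 ≠ e.2 ∧ e.1 ∈ S ∧ e.2 ∈ S) :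
    potential θ θ' S A B ≤ potential θ θ' S (edgeAddStep θ A e) (edgeAddStep θ' B e) := by
  obtain ⟨hne, h1, h2⟩ := he
  have hoff (K : List (V × V)) (v : V) (hv1 : v ≠ e.1) (hv2 : v ≠ e.2) :
      listDeg (K ++ [e]) v = listDeg K v := by
    rw [listDeg_append_singleton, if_neg (by grind), add_zero]
  have hend₁ (K : List (V × V)) : listDeg (K ++ [e]) e.1 = listDeg K e.1 + 1 := by
    rw [listDeg_append_singleton, if_pos (Or.inl rfl)]
  have hend₂ (K : List (V × V)) : listDeg (K ++ [e]) e.2 = listDeg K e.2 + 1 := by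
    rw [listDeg_append_singleton, if_pos (Or.inr rfl)]
  unfold potential edgeAddStep
  by_cases hA : listDeg A e.1 < θ ∧ listDeg A e.2 < θ <;>
    by_cases hB : listDeg B e.1 < θ' ∧ listDeg B e.2 < θ' <;>
    simp only [hA, hB, and_self, ite_true, ite_false]
  · refine le_of_eq (Finset.sum_congr rfl fun v _ => ?_)
    simp only [listDeg_append_singleton]
    push_cast
    ring_nf
  · refine Finset.sum_le_sum_of_eq_off_pair hne h1 h2
      (fun v _ hv1 hv2 => by rw [hoff A v hv1 hv2]) ?_
    simp only [hend₁, hend₂, Nat.cast_add, Nat.cast_one, sub_add_eq_sub_sub]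
    exact tent_add_tent_le_of_gt_or_gt (by omega)
  · refine Finset.sum_le_sum_of_eq_off_pair hne h1 h2
      (fun v _ hv1 hv2 => by rw [hoff B v hv1 hv2]) ?_
    simp only [hend₁, hend₂, Nat.cast_add, Nat.cast_one, add_sub_right_comm]
    exact tent_add_tent_le_of_lt_or_lt (by omega)
  · rfl

lemma potential_le_potential_foldl (θ θ' : ℕ) {S : Finset V} {L : List (V × V)}
    (hL : IsEdgeListOn S L) (A B : List (V × V)) :
    potential θ θ' S A B ≤
      potential θ θ' S (L.foldl (edgeAddStep θ) A) (L.foldl (edgeAddStep θ') B) := by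
  induction L generalizing A B with
  | nil => rfl
  | cons e L ih =>
    exact (potential_le_potential_edgeAddStep θ θ' (hL e List.mem_cons_self)).trans
      (ih (fun f hf => hL f (List.mem_cons_of_mem _ hf)) _ _)

lemma potential_nil {θ θ' : ℕ} (hθ : θ ≤ θ') (S : Finset V) : potential θ θ' S [] [] = 0 :=
  Finset.sum_eq_zero fun v _ => by simp only [tent, listDeg_nil]; omega

lemma potential_le_two_mul_length_sub (θ θ' : ℕ) {S : Finset V} {A B : List (V × V)}
    (hA : IsEdgeListOn S A) (hB : IsEdgeListOn S B) :
    potential θ θ' S A B ≤ 2 * B.length - 2 * A.length :=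
  calc potential θ θ' S A B
      ≤ ∑ v ∈ S, ((listDeg B v : ℤ) - listDeg A v) := Finset.sum_le_sum fun v _ => tent_le _ _
    _ = 2 * B.length - 2 * A.length := by
      rw [Finset.sum_sub_distrib, ← Nat.cast_sum, ← Nat.cast_sum,
        sum_listDeg_eq_two_mul_length hA, sum_listDeg_eq_two_mul_length hB]
      push_cast
      rfl

end

theorem edgeAddProj_mono_general {V : Type*} [DecidableEq V]
    (θ θ' : ℕ) (L : List (V × V)) (hθ : θ ≤ θ')
    (hsimple : ∀ e ∈ L, e.1 ≠ e.2) :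
    (edgeAddProj θ L).length ≤ (edgeAddProj θ' L).length := by
  set S : Finset V := (L.map Prod.fst ++ L.map Prod.snd).toFinset
  have hL : IsEdgeListOn S L := fun e he =>
    ⟨hsimple e he, List.mem_toFinset.2 (List.mem_append_left _ (List.mem_map_of_mem he)),
      List.mem_toFinset.2 (List.mem_append_right _ (List.mem_map_of_mem he))⟩
  have h := calc (0 : ℤ)
      = potential θ θ' S [] [] := (potential_nil hθ S).symm
    _ ≤ potential θ θ' S (edgeAddProj θ L) (edgeAddProj θ' L) :=
      potential_le_potential_foldl θ θ' hL [] []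
    _ ≤ 2 * (edgeAddProj θ' L).length - 2 * (edgeAddProj θ L).length :=
      potential_le_two_mul_length_sub θ θ' (hL.of_sublist (edgeAddProj_sublist θ L))
        (hL.of_sublist (edgeAddProj_sublist θ' L))
  omega

/-- The kept edge count of the bounded-degree projection is monotone in `θ`. -/
theorem edgeAddProj_mono {V : Type*} [DecidableEq V]
    (θ θ' : ℕ) (L : List (V × V)) (hθ : θ ≤ θ')
    (hsimple : ∀ e ∈ L, e.1 ≠ e.2) (hnodup : L.Nodup)
    (hsym : ∀ e ∈ L, (e.2, e.1) ∉ L) :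
    (edgeAddProj θ L).length ≤ (edgeAddProj θ' L).length :=
  edgeAddProj_mono_general θ θ' L hθ hsimple
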